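/- If a group Γ' decomposes as a direct product A × B of two infinite groups, then every element of Γ' has the property that for some positive power, its centralizer in Γ' does not contain ℤ as a finite index subgroup. Equivalently: if a group Γ' contains an element f such that for all n ≥ 1 the centralizer of f^n in Γ' is virtually ℤ (contains an infinite cyclic subgroup of finite index), then Γ' is not isomorphic to a direct product of two infinite groups. -/
import Mathlib


/-- A subgroup-like group is virtually ℤ if it contains an infinite cyclic
subgroup of finite index. -/
def VirtuallyZ (G : Type*) [Group G] : Prop :=
  ∃ K : Subgroup G, K.FiniteIndex ∧ Nonempty (K ≃* Multiplicative ℤ)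

lemma virtuallyZ_congr {G H : Type*} [Group G] [Group H] (e : G ≃* H)
    (hG : VirtuallyZ G) : VirtuallyZ H := by
  obtain ⟨K, hK, ⟨φ⟩⟩ := hG
  refine ⟨K.map e.toMonoidHom, ⟨?_⟩, ⟨((e.subgroupMap K).symm.trans φ)⟩⟩
  rw [Subgroup.index_map_of_injective K e.injective,
    MonoidHom.range_eq_top_of_surjective _ e.surjective, Subgroup.index_top, mul_one]
  exact hK.index_ne_zero

lemma infinite_of_finiteIndex {G : Type*} [Group G] [Infinite G] (H : Subgroup G)
    [H.FiniteIndex] : Infinite H := by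
  have hc : Nat.card H * H.index = 0 := by
    rw [Subgroup.card_mul_index]; exact Nat.card_eq_zero_of_infinite
  have h0 : Nat.card H = 0 := by
    rcases Nat.mul_eq_zero.mp hc with h0 | h0
    · exact h0
    · exact absurd h0 Subgroup.FiniteIndex.index_ne_zero
  rcases Nat.card_eq_zero.mp h0 with h1 | h1
  · exact (h1.false (1 : H)).elim
  · exact h1

lemma not_virtuallyZ_prod {X Y : Type*} [Group X] [Group Y] [Infinite X] [Infinite Y] :
    ¬ VirtuallyZ (X × Y) := by
  rintro ⟨K, hK, ⟨φ⟩⟩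
  set P : Subgroup (X × Y) := (⊤ : Subgroup X).prod ⊥ with hP
  set Q : Subgroup (X × Y) := (⊥ : Subgroup X).prod ⊤ with hQ
  have hPinf : Infinite P := by
    refine Infinite.of_injective (fun x : X => (⟨(x, 1), by simp [hP, Subgroup.mem_prod]⟩ : P)) ?_
    intro x y hxy
    simpa [Prod.ext_iff] using congrArg (fun z : P => (z : X × Y).1) hxy
  have hQinf : Infinite Q := by
    refine Infinite.of_injective (fun y : Y => (⟨(1, y), by simp [hQ, Subgroup.mem_prod]⟩ : Q)) ?_
    intro x y hxy
    simpa [Prod.ext_iff] using congrArg (fun z : Q => (z : X × Y).2) hxy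
  -- find nontrivial elements of K ∩ P and K ∩ Q
  have hgen : ∀ (R : Subgroup (X × Y)), Infinite R →
      ∃ u : X × Y, u ∈ K ∧ u ∈ R ∧ u ≠ 1 := by
    intro R hR
    have : (K.subgroupOf R).FiniteIndex := Subgroup.instFiniteIndex_subgroupOf K R
    have : Infinite (K.subgroupOf R) := infinite_of_finiteIndex (K.subgroupOf R)
    have : Nontrivial (K.subgroupOf R) := Infinite.instNontrivial _
    obtain ⟨w, hw1⟩ := exists_ne (1 : K.subgroupOf R)
    refine ⟨((w : R) : X × Y), Subgroup.mem_subgroupOf.mp w.2, (w : ↥R).2, fun hc => hw1 ?_⟩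
    apply Subtype.ext
    apply Subtype.ext
    exact hc
  obtain ⟨u, huK, huP, hu1⟩ := hgen P hPinf
  obtain ⟨v, hvK, hvQ, hv1⟩ := hgen Q hQinf
  set pu : K := ⟨u, huK⟩
  set pv : K := ⟨v, hvK⟩
  set m : ℤ := Multiplicative.toAdd (φ pu)
  set n : ℤ := Multiplicative.toAdd (φ pv)
  have hm : m ≠ 0 := by
    intro hm0
    apply hu1
    have : φ pu = 1 := by
      have := congrArg Multiplicative.ofAdd hm0
      simpa [m] using this
    have : pu = 1 := φ.injective (by simpa using this)
    exact congrArg Subtype.val this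
  have hn : n ≠ 0 := by
    intro hn0
    apply hv1
    have : φ pv = 1 := by
      have := congrArg Multiplicative.ofAdd hn0
      simpa [n] using this
    have : pv = 1 := φ.injective (by simpa using this)
    exact congrArg Subtype.val this
  have key : pu ^ n = pv ^ m := by
    apply φ.injective
    rw [map_zpow, map_zpow]
    apply Multiplicative.toAdd.injective
    simp [m, n, mul_comm]
  have hmemP : ((pu ^ n : K) : X × Y) ∈ P := by
    simpa using P.zpow_mem huP n
  have hmemQ : ((pu ^ n : K) : X × Y) ∈ Q := by
    rw [key]
    simpa using Q.zpow_mem hvQ m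
  have h1 : ((pu ^ n : K) : X × Y) = 1 := by
    rw [hP, Subgroup.mem_prod] at hmemP
    rw [hQ, Subgroup.mem_prod] at hmemQ
    exact Prod.ext (Subgroup.mem_bot.mp hmemQ.1) (Subgroup.mem_bot.mp hmemP.2)
  have : pu ^ n = 1 := Subtype.ext (by simpa using h1)
  have : φ pu ^ n = 1 := by rw [← map_zpow, this, map_one]
  have : (n * m : ℤ) = 0 := by
    have := congrArg Multiplicative.toAdd this
    simpa [m, mul_comm] using this
  rcases mul_eq_zero.mp this with h | h
  · exact hn h
  · exact hm h

lemma infinite_centralizer {G : Type*} [Group G] [Infinite G] (x : G)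
    (hx : orderOf x = 0 ∨ x = 1) : Infinite (Subgroup.centralizer ({x} : Set G)) := by
  rcases hx with hx | hx
  · refine Infinite.of_injective
      (fun k : ℤ => (⟨x ^ k, by
        rw [Subgroup.mem_centralizer_singleton_iff]
        exact ((Commute.refl x).zpow_left k).eq⟩ :
        Subgroup.centralizer ({x} : Set G))) ?_
    intro a b hab
    have hxy : x ^ a = x ^ b := congrArg Subtype.val hab
    exact injective_zpow_iff_not_isOfFinOrder.mpr (orderOf_eq_zero_iff.mp hx) hxy
  · subst hx
    have : Subgroup.centralizer ({(1 : G)} : Set G) = ⊤ := by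
      ext g
      simp [Subgroup.mem_centralizer_singleton_iff]
    rw [this]
    exact Infinite.of_injective (fun g : G => (⟨g, trivial⟩ : (⊤ : Subgroup G))) fun a b hab =>
      congrArg Subtype.val hab

lemma hord {G : Type*} [Group G] (x : G) (m : ℕ) (hm : 0 < m)
    (hdvd : orderOf x ≠ 0 → orderOf x ∣ m) : orderOf (x ^ m) = 0 ∨ x ^ m = 1 := by
  rcases Nat.eq_zero_or_pos (orderOf x) with h0 | h0
  · left
    rw [orderOf_eq_zero_iff'] at h0 ⊢
    intro k hk hk1
    exact h0 (m * k) (Nat.mul_pos hm hk) (by rwa [pow_mul])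
  · right
    exact orderOf_dvd_iff_pow_eq_one.mp (hdvd (Nat.pos_iff_ne_zero.mp h0))

/-- If a group `Γ'` contains an element `f` such that for all `n ≥ 1` the
centralizer of `f ^ n` in `Γ'` is virtually ℤ, then `Γ'` is not isomorphic to a
direct product of two infinite groups. -/
theorem not_product_of_infinite_of_centralizers_virtuallyZ
    {Γ' : Type*} [Group Γ'] (f : Γ')
    (h : ∀ n : ℕ, 1 ≤ n → VirtuallyZ (Subgroup.centralizer {f ^ n} : Subgroup Γ'))
    (A B : Type*) [Group A] [Group B] [Infinite A] [Infinite B] :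
    ¬ Nonempty (Γ' ≃* A × B) := by
  rintro ⟨e⟩
  set a : A := (e f).1 with ha
  set b : B := (e f).2 with hb
  set n : ℕ := max 1 (orderOf a) * max 1 (orderOf b) with hn
  have hna : 0 < max 1 (orderOf a) := lt_of_lt_of_le one_pos (le_max_left _ _)
  have hnb : 0 < max 1 (orderOf b) := lt_of_lt_of_le one_pos (le_max_left _ _)
  have hnpos : 0 < n := Nat.mul_pos hna hnb
  have hva := h n hnpos
  -- transport along `e`
  have hmap : (Subgroup.centralizer {f ^ n}).map e.toMonoidHom
      = Subgroup.centralizer {e f ^ n} := by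
    ext g
    simp only [Subgroup.mem_map, Subgroup.mem_centralizer_singleton_iff]
    constructor
    · rintro ⟨x, hx, rfl⟩
      simp only [MulEquiv.coe_toMonoidHom]
      rw [← map_pow, ← map_mul, ← map_mul, hx]
    · intro hg
      refine ⟨e.symm g, ?_, by simp⟩
      apply e.injective
      rw [map_mul, map_mul, e.apply_symm_apply, map_pow]
      exact hg
  have hvc : VirtuallyZ (Subgroup.centralizer {e f ^ n} : Subgroup (A × B)) := by
    rw [← hmap]
    exact virtuallyZ_congr (e.subgroupMap _) hva
  have hpow : e f ^ n = (a ^ n, b ^ n) := rfl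
  have hcent : (Subgroup.centralizer {e f ^ n} : Subgroup (A × B))
      = (Subgroup.centralizer {a ^ n}).prod (Subgroup.centralizer {b ^ n}) := by
    rw [hpow]
    ext ⟨c, d⟩
    simp [Subgroup.mem_centralizer_singleton_iff, Subgroup.mem_prod, Prod.ext_iff]
  rw [hcent] at hvc
  have hA : orderOf (a ^ n) = 0 ∨ a ^ n = 1 := by
    refine hord a n hnpos fun h0 => ?_
    rw [hn, max_eq_right (Nat.one_le_iff_ne_zero.mpr h0)]
    exact dvd_mul_right _ _
  have hB : orderOf (b ^ n) = 0 ∨ b ^ n = 1 := by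
    refine hord b n hnpos fun h0 => ?_
    rw [hn, max_eq_right (Nat.one_le_iff_ne_zero.mpr h0)]
    exact dvd_mul_left _ _
  have : Infinite (Subgroup.centralizer ({a ^ n} : Set A)) := infinite_centralizer _ hA
  have : Infinite (Subgroup.centralizer ({b ^ n} : Set B)) := infinite_centralizer _ hB
  exact not_virtuallyZ_prod
    (virtuallyZ_congr (Subgroup.prodEquiv _ _) hvc)
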